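/- arXiv:2411.08252 — 2 statements merged into one kernel-verified Lean document; each statement's English description precedes it below -/
import Mathlib

section
/- A topological space that has locally finitely many irreducible components is locally connected; in fact, every point has a neighborhood with finitely many connected components. -/
/-!
Every point `u` of an open set `U` lies in `irreducibleComponent u ∩ U`, which is irreducible
(being open in an irreducible set), hence connected. So the finitely many irreducible components
meeting `U` cover `U` by finitely many connected sets, and `U` has finitely many connected
components. These components are then closed and finite in number, hence open; shrinking `U`
inside any neighbourhood gives a basis of connected open neighbourhoods.
-/

open Set Topology

section ConnectedComponents

variable {α : Type*} [TopologicalSpace α]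

instance ConnectedComponents.t1Space : T1Space (ConnectedComponents α) := by
  refine ⟨ConnectedComponents.surjective_coe.forall.2 fun x => ?_⟩
  rw [← ConnectedComponents.isQuotientMap_coe.isClosed_preimage,
    connectedComponents_preimage_singleton]
  exact isClosed_connectedComponent

theorem isOpen_connectedComponent_of_finite [Finite (ConnectedComponents α)] (x : α) :
    IsOpen (connectedComponent x) :=
  ConnectedComponents.discreteTopology_iff.1 inferInstance x

theorem IsOpen.isOpen_connectedComponentIn_of_finite {F : Set α} (hF : IsOpen F)
    [Finite (ConnectedComponents F)] (x : α) : IsOpen (connectedComponentIn F x) := by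
  by_cases hx : x ∈ F
  · rw [connectedComponentIn_eq_image hx]
    exact hF.isOpenMap_subtype_val _ (isOpen_connectedComponent_of_finite _)
  · rw [connectedComponentIn_eq_empty hx]
    exact isOpen_empty

theorem finite_connectedComponents_of_cover {S : Set (Set α)} (hS : S.Finite)
    (hpre : ∀ s ∈ S, IsPreconnected s) (hcover : ∀ x, ∃ s ∈ S, x ∈ s) :
    Finite (ConnectedComponents α) := by
  have hsub : ∀ s ∈ S, ((↑) '' s : Set (ConnectedComponents α)).Subsingleton := fun s hs =>
    ((hpre s hs).image _ ConnectedComponents.continuous_coe.continuousOn).subsingleton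
  refine Set.finite_univ_iff.1 ((hS.biUnion fun s hs => (hsub s hs).finite).subset ?_)
  rintro c -
  obtain ⟨x, rfl⟩ := ConnectedComponents.surjective_coe c
  obtain ⟨s, hs, hxs⟩ := hcover x
  exact mem_biUnion hs (mem_image_of_mem _ hxs)

end ConnectedComponents

theorem IsOpen.finite_connectedComponents_of_finite_irreducibleComponents {X : Type*}
    [TopologicalSpace X] {U : Set X} (hU : IsOpen U)
    (hfin : {V ∈ irreducibleComponents X | (V ∩ U).Nonempty}.Finite) :
    Finite (ConnectedComponents U) := by
  refine finite_connectedComponents_of_cover (hfin.image (Subtype.val ⁻¹' ·)) ?_ ?_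
  · rintro _ ⟨V, ⟨hV, -⟩, rfl⟩
    exact (hV.prop.isPreirreducible.preimage
      hU.isOpenEmbedding_subtypeVal).isPreconnected
  · intro u
    exact ⟨_, ⟨irreducibleComponent u, ⟨irreducibleComponent_mem_irreducibleComponents _,
      u, mem_irreducibleComponent, u.2⟩, rfl⟩, mem_irreducibleComponent⟩

/-- A topological space that has locally finitely many irreducible components is locally
connected; in fact, every point has a neighborhood with finitely many connected components. -/
theorem stmt_0 (X : Type*) [TopologicalSpace X]
    (h : ∀ x : X, ∃ U : Set X, IsOpen U ∧ x ∈ U ∧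
      {V ∈ irreducibleComponents X | (V ∩ U).Nonempty}.Finite) :
    LocallyConnectedSpace X ∧
      ∀ x : X, ∃ U ∈ nhds x, Finite (ConnectedComponents U) := by
  refine ⟨locallyConnectedSpace_iff_subsets_isOpen_isConnected.2 fun x O hO => ?_, fun x => ?_⟩
  · obtain ⟨O', hO'O, hO', hxO'⟩ := mem_nhds_iff.1 hO
    obtain ⟨U, hU, hxU, hfin⟩ := h x
    have hW : IsOpen (U ∩ O') := hU.inter hO'
    have : Finite (ConnectedComponents ↥(U ∩ O')) :=
      hW.finite_connectedComponents_of_finite_irreducibleComponents <| hfin.subset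
        fun V hV => ⟨hV.1, hV.2.mono (inter_subset_inter_right _ inter_subset_left)⟩
    exact ⟨connectedComponentIn (U ∩ O') x,
      (connectedComponentIn_subset _ _).trans (inter_subset_right.trans hO'O),
      hW.isOpen_connectedComponentIn_of_finite x, mem_connectedComponentIn ⟨hxU, hxO'⟩,
      isConnected_connectedComponentIn_iff.2 ⟨hxU, hxO'⟩⟩
  · obtain ⟨U, hU, hxU, hfin⟩ := h x
    exact ⟨U, hU.mem_nhds hxU, hU.finite_connectedComponents_of_finite_irreducibleComponents hfin⟩
end

section
/- Let f : X → Y be a continuous map of sober topological spaces which is closed, has finite fibers, and such that the group Aut(X/Y) of homeomorphisms of X over Y acts transitively on every fiber of f. If Y is Noetherian, then X is Noetherian. -/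
/-!
By Noetherian induction on closed `C ⊆ Y` we show that `f ⁻¹' C` is Noetherian. A reducible `C`
is covered by two proper closed subsets. If `C = closure {η}` is irreducible, then, since a closed
map lifts specializations and `Aut(X/Y)` is transitive on fibres, every point over `C` is a
specialization of one of the finitely many points `x` over `η`. Such an `x` specializes to no
other point of its fibre: if `x ⤳ g x` for `g` over `Y`, then `x` is `g`-periodic because its fibre
is finite, so `g x ⤳ x`. Hence for an open `U ∋ x` the set `closure {x} \ U` lies over the proper
closed subset `f '' (closure {x} \ U)` of `C`, and this makes `closure {x}` Noetherian.
-/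

open Set Function TopologicalSpace

lemma Function.mem_periodicPts_of_mapsTo_of_finite {α : Type*} {g : α → α} (hg : Injective g)
    {s : Set α} (hs : s.Finite) (hmaps : MapsTo g s s) {x : α} (hx : x ∈ s) :
    x ∈ periodicPts g := by
  obtain ⟨m, -, n, -, hne, heq⟩ := infinite_univ.exists_ne_map_eq_of_mapsTo
    (f := fun k => g^[k] x) (fun k _ => hmaps.iterate k hx) hs
  rcases hne.lt_or_gt with hlt | hlt
  · exact mk_mem_periodicPts (by lia) (iterate_cancel hg heq.symm)
  · exact mk_mem_periodicPts (by lia) (iterate_cancel hg heq)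

lemma Specializes.eq_of_mem_periodicPts {X : Type*} [TopologicalSpace X] [T0Space X]
    {g : X → X} (hg : Continuous g) {x : X} (h : x ⤳ g x) (hx : x ∈ periodicPts g) :
    g x = x := by
  obtain ⟨n, hn, hper⟩ := mem_periodicPts.mp hx
  have specializes_iterate : ∀ k, x ⤳ g^[k] x := by
    intro k
    induction k with
    | zero => exact specializes_rfl
    | succ k ih =>
      rw [iterate_succ_apply']
      exact h.trans (ih.map hg)
  have back : g x ⤳ x := by
    have := (specializes_iterate (n - 1)).map hg
    rwa [← iterate_succ_apply' g, Nat.succ_eq_add_one, Nat.sub_add_cancel hn, hper.eq] at this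
  exact (h.antisymm back).eq.symm

lemma isCompact_of_subset_closure_singleton {X : Type*} [TopologicalSpace X] {x : X} {t : Set X}
    (ht : t ⊆ closure {x}) (h : ∀ U, IsOpen U → x ∈ U → IsCompact (t \ U)) : IsCompact t := by
  classical
  refine isCompact_of_finite_subcover fun U hUo hcov => ?_
  rcases t.eq_empty_or_nonempty with rfl | ⟨p, hp⟩
  · exact ⟨∅, by simp⟩
  obtain ⟨i, hpi⟩ := mem_iUnion.mp (hcov hp)
  have hxi : x ∈ U i := (specializes_iff_mem_closure.mpr (ht hp)).mem_open (hUo i) hpi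
  obtain ⟨F, hF⟩ := (h _ (hUo i) hxi).elim_finite_subcover U hUo fun q hq => hcov hq.1
  refine ⟨insert i F, fun q hq => ?_⟩
  by_cases hqi : q ∈ U i
  · exact mem_biUnion (Finset.mem_insert_self i F) hqi
  · obtain ⟨j, hj, hqj⟩ := mem_iUnion₂.mp (hF ⟨hq, hqi⟩)
    exact mem_biUnion (Finset.mem_insert_of_mem hj) hqj

lemma TopologicalSpace.NoetherianSpace.union {X : Type*} [TopologicalSpace X] (s t : Set X)
    [NoetherianSpace s] [NoetherianSpace t] : NoetherianSpace ↥(s ∪ t) := by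
  rw [union_eq_iUnion]
  have : ∀ b : Bool, NoetherianSpace ↥(cond b s t) := fun b => by cases b <;> assumption
  exact NoetherianSpace.iUnion _

section Fibers

variable {X Y : Type*} [TopologicalSpace X] {f : X → Y}

def TransitiveOnFibers (f : X → Y) : Prop :=
  ∀ x z : X, f x = f z → ∃ g : X ≃ₜ X, (∀ a : X, f (g a) = f a) ∧ g x = z

lemma TransitiveOnFibers.eq_of_specializes [T0Space X] (htrans : TransitiveOnFibers f)
    (hfib : ∀ y : Y, (f ⁻¹' {y}).Finite) {x z : X} (hxz : f x = f z) (h : x ⤳ z) : z = x := by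
  obtain ⟨g, hgf, rfl⟩ := htrans x z hxz
  exact h.eq_of_mem_periodicPts g.continuous <| mem_periodicPts_of_mapsTo_of_finite
    g.injective (hfib (f x)) (fun a ha => (hgf a).trans ha) rfl

variable [TopologicalSpace Y]

lemma TransitiveOnFibers.exists_specializes (htrans : TransitiveOnFibers f)
    (hclosed : IsClosedMap f) {x p : X} (h : f x ⤳ f p) : ∃ x', f x' = f x ∧ x' ⤳ p := by
  obtain ⟨q, hxq, hqp⟩ := hclosed.specializingMap h
  obtain ⟨g, hgf, rfl⟩ := htrans q p hqp
  exact ⟨g x, hgf x, hxq.map g.continuous⟩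

lemma noetherianSpace_closure_singleton_of_ssubset [T0Space X] (hf : Continuous f)
    (hclosed : IsClosedMap f) (hfib : ∀ y : Y, (f ⁻¹' {y}).Finite)
    (htrans : TransitiveOnFibers f) {x : X}
    (IH : ∀ D, IsClosed D → D ⊂ closure {f x} → NoetherianSpace ↥(f ⁻¹' D)) :
    NoetherianSpace ↥(closure {x}) := by
  refine (noetherianSpace_set_iff _).mpr fun t ht =>
    isCompact_of_subset_closure_singleton ht fun U hU hxU => ?_
  set D := f '' (closure {x} \ U)
  have hDsub : D ⊆ closure {f x} := by
    rintro _ ⟨z, hz, rfl⟩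
    exact specializes_iff_mem_closure.mp ((specializes_iff_mem_closure.mpr hz.1).map hf)
  have hxD : f x ∉ D := by
    rintro ⟨z, hz, hzx⟩
    have hzx : z = x := htrans.eq_of_specializes hfib hzx.symm (specializes_iff_mem_closure.2 hz.1)
    exact hz.2 (hzx ▸ hxU)
  have := IH D (hclosed _ (isClosed_closure.sdiff hU))
    ((ssubset_iff_of_subset hDsub).mpr ⟨f x, subset_closure rfl, hxD⟩)
  exact (noetherianSpace_set_iff _).mp this _
    ((sdiff_subset_sdiff_left ht).trans (subset_preimage_image f _))

lemma noetherianSpace_preimage_closure_singleton_of_ssubset [T0Space X] (hf : Continuous f)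
    (hclosed : IsClosedMap f) (hfib : ∀ y : Y, (f ⁻¹' {y}).Finite)
    (htrans : TransitiveOnFibers f) {η : Y}
    (IH : ∀ D, IsClosed D → D ⊂ closure {η} → NoetherianSpace ↥(f ⁻¹' D)) :
    NoetherianSpace ↥(f ⁻¹' closure {η}) := by
  by_cases hη : η ∈ range f
  · obtain ⟨x₀, rfl⟩ := hη
    have hcover : f ⁻¹' closure {f x₀} ⊆ ⋃ x : f ⁻¹' {f x₀}, closure {x.1} := by
      intro p hp
      obtain ⟨x, hx, hxp⟩ := htrans.exists_specializes hclosed (specializes_iff_mem_closure.2 hp)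
      exact mem_iUnion.mpr ⟨⟨x, hx⟩, specializes_iff_mem_closure.mp hxp⟩
    have : Finite (f ⁻¹' {f x₀}) := (hfib _).to_subtype
    have : ∀ x : f ⁻¹' {f x₀}, NoetherianSpace ↥(closure {x.1}) := fun x =>
      noetherianSpace_closure_singleton_of_ssubset hf hclosed hfib htrans (x.2.symm ▸ IH)
    have := NoetherianSpace.iUnion fun x : f ⁻¹' {f x₀} => closure {x.1}
    exact NoetherianSpace.of_subset hcover
  · rw [← preimage_inter_range]
    exact IH _ (isClosed_closure.inter hclosed.isClosed_range)
      ((ssubset_iff_of_subset inter_subset_left).mpr ⟨η, subset_closure rfl, fun h => hη h.2⟩)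

lemma noetherianSpace_preimage_closeds [T0Space X] [QuasiSober Y] [NoetherianSpace Y]
    (hf : Continuous f) (hclosed : IsClosedMap f) (hfib : ∀ y : Y, (f ⁻¹' {y}).Finite)
    (htrans : TransitiveOnFibers f) (C : Closeds Y) : NoetherianSpace ↥(f ⁻¹' C) := by
  induction C using WellFoundedLT.induction with
  | _ C IH =>
  have IH' : ∀ D, IsClosed D → D ⊂ C → NoetherianSpace ↥(f ⁻¹' D) :=
    fun D hD hDC => IH ⟨D, hD⟩ hDC
  by_cases hirr : IsIrreducible (C : Set Y)
  · rw [← (hirr.isGenericPoint_genericPoint C.isClosed).def] at IH' ⊢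
    exact noetherianSpace_preimage_closure_singleton_of_ssubset hf hclosed hfib htrans IH'
  rcases (C : Set Y).eq_empty_or_nonempty with hC | hC
  · rw [hC, preimage_empty]
    infer_instance
  obtain ⟨z₁, z₂, hz₁, hz₂, hcover, hC₁, hC₂⟩ : ∃ z₁ z₂ : Set Y, IsClosed z₁ ∧ IsClosed z₂ ∧
      (C : Set Y) ⊆ z₁ ∪ z₂ ∧ ¬(C : Set Y) ⊆ z₁ ∧ ¬(C : Set Y) ⊆ z₂ := by
    simpa [isPreirreducible_iff_isClosed_union_isClosed] using fun h => hirr ⟨hC, h⟩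
  have := IH' _ (C.isClosed.inter hz₁) (inter_ssubset_left_iff.mpr hC₁)
  have := IH' _ (C.isClosed.inter hz₂) (inter_ssubset_left_iff.mpr hC₂)
  have := NoetherianSpace.union (f ⁻¹' (C ∩ z₁)) (f ⁻¹' (C ∩ z₂))
  refine NoetherianSpace.of_subset (W := f ⁻¹' (C ∩ z₁) ∪ f ⁻¹' (C ∩ z₂)) ?_
  rw [← preimage_union, ← inter_union_distrib_left, inter_eq_left.mpr hcover]

end Fibers

open TopologicalSpace in
theorem stmt_11_general (X Y : Type*) [TopologicalSpace X] [TopologicalSpace Y]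
    [T0Space X] [QuasiSober Y] (f : X → Y)
    (hf : Continuous f) (hclosed : IsClosedMap f)
    (hfib : ∀ y : Y, (f ⁻¹' {y}).Finite)
    (htrans : ∀ x z : X, f x = f z →
      ∃ g : X ≃ₜ X, (∀ a : X, f (g a) = f a) ∧ g x = z)
    [NoetherianSpace Y] :
    NoetherianSpace X := by
  have := noetherianSpace_preimage_closeds hf hclosed hfib htrans ⊤
  rwa [Closeds.coe_top, preimage_univ, noetherian_univ_iff] at this

open TopologicalSpace in
/-- If `f : X → Y` is a continuous, closed map of sober spaces with finite fibers such that the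
group of homeomorphisms of `X` over `Y` acts transitively on each fiber, and `Y` is Noetherian,
then `X` is Noetherian. -/
theorem stmt_11 (X Y : Type*) [TopologicalSpace X] [TopologicalSpace Y]
    [QuasiSober X] [T0Space X] [QuasiSober Y] [T0Space Y] (f : X → Y)
    (hf : Continuous f) (hclosed : IsClosedMap f)
    (hfib : ∀ y : Y, (f ⁻¹' {y}).Finite)
    (htrans : ∀ x z : X, f x = f z →
      ∃ g : X ≃ₜ X, (∀ a : X, f (g a) = f a) ∧ g x = z)
    [NoetherianSpace Y] :
    NoetherianSpace X :=
  stmt_11_general X Y f hf hclosed hfib htrans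
end
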